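/- (Lemma 2: history-independence of modal context trees.) Let M be the model of an interpreted system with regular labelling and φ an EHS⁺_{AB̄N} formula (an EHS⁺ formula whose modalities are all among K_i, C_Γ, ⟨A⟩, ⟨B̄⟩, ⟨N⟩). If I and I' are intervals of M with g(I) = g(I'), then MCT_I^φ = MCT_{I'}^φ. -/

import Mathlib

/-- The Halpern-Shoham interval modalities. -/
inductive HSMod : Type where
  | A | Abar | B | Bbar | D | Dbar | E | Ebar | L | Lbar | N | Nbar | O | Obar
  deriving DecidableEq

/-- Formulas of the logic EHS⁺ over agents `0,…,m` and propositional variables `V`. -/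
inductive EHSFormula (m : ℕ) (V : Type) : Type where
  | pt : EHSFormula m V
  | prop : V → EHSFormula m V
  | neg : EHSFormula m V → EHSFormula m V
  | conj : EHSFormula m V → EHSFormula m V → EHSFormula m V
  | know : Fin (m + 1) → EHSFormula m V → EHSFormula m V
  | common : Finset (Fin (m + 1)) → EHSFormula m V → EHSFormula m V
  | dia : HSMod → EHSFormula m V → EHSFormula m V
  deriving DecidableEq

/-- An interpreted system with regular labelling over agents `0,…,m` (agent `0` is the
environment) and variables `Var`. -/
structure ISRL (m : ℕ) (Var : Type) where
  L : Fin (m + 1) → Type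
  finL : ∀ i, Fintype (L i)
  l0 : ∀ i, L i
  ACT : Fin (m + 1) → Type
  finACT : ∀ i, Fintype (ACT i)
  P : ∀ i, L i → Set (ACT i)
  T : ∀ i, L i → (∀ j, ACT j) → L i → Prop
  lab : Var → RegularExpression (∀ i, L i)

attribute [instance] ISRL.finL ISRL.finACT

namespace ISRL

variable {m : ℕ} {Var : Type}

/-- Global configurations. -/
abbrev G (IS : ISRL m Var) : Type := ∀ i, IS.L i

instance (IS : ISRL m Var) : Fintype IS.G := Pi.instFintype

/-- The initial global configuration. -/
def g0 (IS : ISRL m Var) : IS.G := IS.l0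

/-- The global transition relation `t^G`. -/
def tG (IS : ISRL m Var) (g g' : IS.G) : Prop :=
  ∃ a : ∀ j, IS.ACT j, ∀ i, a i ∈ IS.P i (g i) ∧ IS.T i (g i) a (g' i)

/-- A partial state: a nonempty `t^G`-chain of configurations. -/
def IsPState (IS : ISRL m Var) (w : List IS.G) : Prop :=
  w ≠ [] ∧ w.Chain' IS.tG

/-- A global state of the model: a partial state starting at the initial configuration. -/
def IsState (IS : ISRL m Var) (w : List IS.G) : Prop :=
  IS.IsPState w ∧ w.head? = some IS.g0

/-- `g(s)`: the actual configuration of a (partial) state, i.e. its last configuration. -/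
def gOf (IS : ISRL m Var) (w : List IS.G) : IS.G := w.getLastD IS.g0

/-- The global transition relation `t` of the model: extension by exactly one configuration. -/
def step (IS : ISRL m Var) (w w' : List IS.G) : Prop := ∃ g : IS.G, w' = w ++ [g]

/-- Epistemic indistinguishability of states for agent `i`. -/
def simS (IS : ISRL m Var) (i : Fin (m + 1)) (w w' : List IS.G) : Prop :=
  IS.gOf w i = IS.gOf w' i

/-- An interval of the model: a nonempty `t`-path of global states. -/
def IsInterval (IS : ISRL m Var) (l : List (List IS.G)) : Prop :=
  l ≠ [] ∧ (∀ w ∈ l, IS.IsState w) ∧ l.Chain' IS.step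

/-- Intervals of the model of `IS`. -/
structure Interval (IS : ISRL m Var) : Type where
  seq : List (List IS.G)
  isInterval : IS.IsInterval seq

namespace Interval

variable {IS : ISRL m Var}

/-- `first(I)`. -/
def first (I : Interval IS) : List IS.G := I.seq.headD []

/-- `last(I)`. -/
def last (I : Interval IS) : List IS.G := I.seq.getLastD []

/-- `I` is a point interval. -/
def isPt (I : Interval IS) : Prop := I.seq.length = 1

/-- `g(I)`, the word of configurations read along `I`. -/
def gword (I : Interval IS) : List IS.G := I.seq.map IS.gOf

end Interval

section rels

variable {IS : ISRL m Var}

def relA (I I' : Interval IS) : Prop := I'.first = I.last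
def relB (I I' : Interval IS) : Prop :=
  ∃ J : List (List IS.G), J ≠ [] ∧ I.seq = I'.seq ++ J
def relD (I I' : Interval IS) : Prop :=
  ∃ J K : List (List IS.G), J ≠ [] ∧ K ≠ [] ∧ I.seq = J ++ I'.seq ++ K
def relE (I I' : Interval IS) : Prop :=
  ∃ J : List (List IS.G), J ≠ [] ∧ I.seq = J ++ I'.seq
def relL (I I' : Interval IS) : Prop := Relation.TransGen IS.step I.last I'.first
def relN (I I' : Interval IS) : Prop := IS.step I.last I'.first
def relO (I I' : Interval IS) : Prop :=
  ∃ J K : List (List IS.G), J ≠ [] ∧ K ≠ [] ∧ I.seq ++ J = K ++ I'.seq ∧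
    IS.IsInterval (I.seq ++ J)

end rels

/-- The Allen relations on intervals of the model of `IS`. -/
def hsRel (IS : ISRL m Var) : HSMod → Interval IS → Interval IS → Prop
  | .A => fun I I' => relA I I'
  | .Abar => fun I I' => relA I' I
  | .B => fun I I' => relB I I'
  | .Bbar => fun I I' => relB I' I
  | .D => fun I I' => relD I I'
  | .Dbar => fun I I' => relD I' I
  | .E => fun I I' => relE I I'
  | .Ebar => fun I I' => relE I' I
  | .L => fun I I' => relL I I'
  | .Lbar => fun I I' => relL I' I
  | .N => fun I I' => relN I I'
  | .Nbar => fun I I' => relN I' I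
  | .O => fun I I' => relO I I'
  | .Obar => fun I I' => relO I' I

/-- Epistemic indistinguishability of intervals for agent `i`. -/
def simI (IS : ISRL m Var) (i : Fin (m + 1)) (I I' : Interval IS) : Prop :=
  List.Forall₂ (IS.simS i) I.seq I'.seq

/-- `∼_Γ`: the transitive closure of the union of the `∼_i`, `i ∈ Γ`. -/
def simC (IS : ISRL m Var) (Γ : Finset (Fin (m + 1))) : Interval IS → Interval IS → Prop :=
  Relation.TransGen (fun I I' => ∃ i ∈ Γ, IS.simI i I I')

/-- Satisfaction of EHS⁺ formulas at an interval, with respect to a labelling `lab`. -/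
def Sat (IS : ISRL m Var) {W : Type} (lab : W → RegularExpression IS.G) :
    EHSFormula m W → Interval IS → Prop
  | .pt, I => I.isPt
  | .prop p, I => I.gword ∈ (lab p).matches'
  | .neg φ, I => ¬ Sat IS lab φ I
  | .conj φ ψ, I => Sat IS lab φ I ∧ Sat IS lab ψ I
  | .know i φ, I => ∀ I', IS.simI i I' I → Sat IS lab φ I'
  | .common Γ φ, I => ∀ I', IS.simC Γ I' I → Sat IS lab φ I'
  | .dia X φ, I => ∃ I', IS.hsRel X I I' ∧ Sat IS lab φ I'

end ISRL

/-- The `AB̄N` fragment of EHS⁺: all modalities are among `K_i`, `C_Γ`, `⟨A⟩`, `⟨B̄⟩`, `⟨N⟩`. -/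
def IsABN {m : ℕ} {V : Type} : EHSFormula m V → Prop
  | .pt => True
  | .prop _ => True
  | .neg φ => IsABN φ
  | .conj φ ψ => IsABN φ ∧ IsABN ψ
  | .know _ φ => IsABN φ
  | .common _ φ => IsABN φ
  | .dia X φ => (X = HSMod.A ∨ X = HSMod.Bbar ∨ X = HSMod.N) ∧ IsABN φ

/-- A size function on formulas (used as a termination measure). -/
def fsize {m : ℕ} {V : Type} : EHSFormula m V → ℕ
  | .pt => 1
  | .prop _ => 1
  | .neg φ => fsize φ + 1
  | .conj φ ψ => fsize φ + fsize ψ + 1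
  | .know _ φ => fsize φ + 1
  | .common _ φ => fsize φ + 1
  | .dia _ φ => fsize φ + 1

/-- The set of top-level subformulas of a formula: modal subformulas not in the scope of
any modality. -/
def TL {m : ℕ} {V : Type} [DecidableEq V] : EHSFormula m V → Finset (EHSFormula m V)
  | .pt => ∅
  | .prop _ => ∅
  | .neg φ => TL φ
  | .conj φ ψ => TL φ ∪ TL ψ
  | .know i φ => {EHSFormula.know i φ}
  | .common Γ φ => {EHSFormula.common Γ φ}
  | .dia X φ => {EHSFormula.dia X φ}

/-- The body of a (modal) formula. -/
def body {m : ℕ} {V : Type} : EHSFormula m V → EHSFormula m V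
  | .pt => .pt
  | .prop p => .prop p
  | .neg φ => .neg φ
  | .conj φ ψ => .conj φ ψ
  | .know _ φ => φ
  | .common _ φ => φ
  | .dia _ φ => φ

theorem fsize_body_lt {m : ℕ} {V : Type} [DecidableEq V] (φ : EHSFormula m V) :
    ∀ χ ∈ TL φ, fsize (body χ) < fsize φ := by
  induction φ with
  | pt => simp [TL]
  | prop p => simp [TL]
  | neg φ ih =>
      intro χ hχ
      have := ih χ hχ
      simp only [fsize]
      omega
  | conj φ ψ ih1 ih2 =>
      intro χ hχ
      simp only [TL, Finset.mem_union] at hχ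
      rcases hχ with h | h
      · have := ih1 χ h; simp only [fsize]; omega
      · have := ih2 χ h; simp only [fsize]; omega
  | know i φ ih =>
      intro χ hχ
      simp only [TL, Finset.mem_singleton] at hχ
      subst hχ
      simp only [body, fsize]
      omega
  | common Γ φ ih =>
      intro χ hχ
      simp only [TL, Finset.mem_singleton] at hχ
      subst hχ
      simp only [body, fsize]
      omega
  | dia X φ ih =>
      intro χ hχ
      simp only [TL, Finset.mem_singleton] at hχ
      subst hχ
      simp only [body, fsize]
      omega

/-- The function `f(φ) = base · ∏_{Xψ top-level subformula of φ} 2^{f(ψ)}`, where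
`base = 2·|G|²·∏_{p ∈ Var} |Q_p|` is supplied as a parameter. -/
def fval {m : ℕ} {V : Type} [DecidableEq V] (base : ℕ) (φ : EHSFormula m V) : ℕ :=
  base * ∏ χ ∈ (TL φ).attach, 2 ^ fval base (body χ.1)
termination_by fsize φ
decreasing_by exact fsize_body_lt φ χ.1 χ.2

namespace ISRL

variable {m : ℕ} {Var : Type}

/-- The relation on intervals associated with a top-level (modal) subformula:
`R_{K_i} = ∼_i`, `R_{C_Γ} = ∼_Γ`, and `R_{⟨X⟩} = R_X`. -/
def modRel (IS : ISRL m Var) {W : Type} : EHSFormula m W → Interval IS → Interval IS → Prop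
  | .know i _ => IS.simI i
  | .common Γ _ => IS.simC Γ
  | .dia X _ => IS.hsRel X
  | _ => fun _ _ => False

/-- Equality of the modal context trees `MCT_I^φ = MCT_{I'}^φ`, expressed recursively:
the root labels `(g(first(I)), g(last(I)), pi(I), 𝒜_{g(I)})` coincide, and for every
top-level subformula `Xψ` of `φ` the sets of subtrees `{MCT_J^ψ : I R_X J}` and
`{MCT_{J'}^ψ : I' R_X J'}` coincide. -/
def MCTEq (IS : ISRL m Var) [DecidableEq Var] (Q : Var → Type) (dfa : ∀ p, DFA IS.G (Q p))
    (φ : EHSFormula m Var) (I I' : Interval IS) : Prop :=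
  IS.gOf I.first = IS.gOf I'.first ∧
  IS.gOf I.last = IS.gOf I'.last ∧
  (I.isPt ↔ I'.isPt) ∧
  (∀ p, (dfa p).eval I.gword = (dfa p).eval I'.gword) ∧
  (∀ χ ∈ TL φ,
    (∀ J, IS.modRel χ I J → ∃ J', IS.modRel χ I' J' ∧ MCTEq IS Q dfa (body χ) J J') ∧
    (∀ J', IS.modRel χ I' J' → ∃ J, IS.modRel χ I J ∧ MCTEq IS Q dfa (body χ) J J'))
termination_by fsize φ
decreasing_by all_goals exact fsize_body_lt φ _ (by assumption)

end ISRL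

/-!
The root label of `MCT_I^φ` is read off `g(I)`, so only the children need to be transferred
from `I` to `I'`. The relations `∼_i` and `∼_Γ` only see configurations, so `I` and `I'` have the
same epistemic children. The states of an `⟨A⟩`- or `⟨N⟩`-successor `J` of `I` all extend
`last(I)`, and being a state depends on the history only through its last configuration:
replacing the prefix `last(I)` by `last(I')` throughout `J` gives a successor of `I'` with the
same word. A `⟨B̄⟩`-successor of `I` is `I` followed by an `⟨N⟩`-successor, and transfers likewise.
-/

namespace ISRL

variable {m : ℕ} {Var : Type} {IS : ISRL m Var}

lemma getLast?_eq_some_gOf {s : List IS.G} (hs : s ≠ []) : s.getLast? = some (IS.gOf s) := by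
  simp [gOf, List.getLastD_eq_getLast?, List.getLast?_eq_some_getLast hs]

lemma gOf_append_congr {s s' : List IS.G} (hg : IS.gOf s = IS.gOf s') (r : List IS.G) :
    IS.gOf (s ++ r) = IS.gOf (s' ++ r) := by
  cases r with
  | nil => simpa using hg
  | cons a t => simp [gOf, List.getLastD_eq_getLast?, List.getLast?_append, List.getLast?_cons]

lemma IsState.append_congr {s s' r : List IS.G} (h : IS.IsState (s ++ r)) (hs : s ≠ [])
    (hs' : IS.IsState s') (hg : IS.gOf s = IS.gOf s') : IS.IsState (s' ++ r) := by
  obtain ⟨⟨-, hsr⟩, -⟩ := h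
  obtain ⟨⟨hs'ne, hs'chain⟩, hs'head⟩ := hs'
  obtain ⟨-, hr, hjoin⟩ := List.isChain_append.1 hsr
  refine ⟨⟨by simp [hs'ne], List.IsChain.append hs'chain hr ?_⟩, ?_⟩
  · rw [getLast?_eq_some_gOf hs'ne, ← hg]
    rintro x ⟨⟩
    exact hjoin _ (getLast?_eq_some_gOf hs)
  · rwa [List.head?_append_of_ne_nil _ hs'ne]

lemma prefix_of_isChain_step {K : List (List IS.G)} (hK : K.IsChain IS.step) {s : List IS.G}
    (hs : K.head? = some s) : ∀ w ∈ K, s <+: w := by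
  refine hK.induction _ _ (fun v w ⟨g, hw⟩ hv => hw ▸ hv.trans (List.prefix_append _ _)) ?_
  intro hne
  rw [List.head?_eq_some_head hne] at hs
  exact (Option.some.inj hs) ▸ List.prefix_refl _

namespace Interval

lemma seq_ne_nil (I : Interval IS) : I.seq ≠ [] := I.isInterval.1

lemma isState_of_mem (I : Interval IS) {w : List IS.G} (hw : w ∈ I.seq) : IS.IsState w :=
  I.isInterval.2.1 w hw

lemma isChain (I : Interval IS) : I.seq.IsChain IS.step := I.isInterval.2.2

lemma head?_seq (I : Interval IS) : I.seq.head? = some I.first := by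
  cases h : I.seq with
  | nil => exact absurd h I.seq_ne_nil
  | cons a t => simp [first, h]

lemma getLast?_seq (I : Interval IS) : I.seq.getLast? = some I.last := by
  simp [last, List.getLastD_eq_getLast?, List.getLast?_eq_some_getLast I.seq_ne_nil]

lemma isState_last (I : Interval IS) : IS.IsState I.last :=
  I.isState_of_mem (List.mem_of_getLast? I.getLast?_seq)

lemma first_mk {l : List (List IS.G)} (hl : IS.IsInterval l) {w : List IS.G}
    (h : l.head? = some w) : (Interval.mk l hl).first = w := by
  cases l with
  | nil => cases h
  | cons a t => exact Option.some.inj h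

lemma gword_head? (I : Interval IS) : I.gword.head? = some (IS.gOf I.first) := by
  rw [gword, List.head?_map, I.head?_seq]; rfl

lemma gword_getLast? (I : Interval IS) : I.gword.getLast? = some (IS.gOf I.last) := by
  rw [gword, List.getLast?_map, I.getLast?_seq]; rfl

lemma gOf_first_eq_of_gword_eq {I I' : Interval IS} (h : I.gword = I'.gword) :
    IS.gOf I.first = IS.gOf I'.first :=
  Option.some.inj (I.gword_head?.symm.trans (h ▸ I'.gword_head?))

lemma gOf_last_eq_of_gword_eq {I I' : Interval IS} (h : I.gword = I'.gword) :
    IS.gOf I.last = IS.gOf I'.last :=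
  Option.some.inj (I.gword_getLast?.symm.trans (h ▸ I'.gword_getLast?))

lemma isPt_iff_of_gword_eq {I I' : Interval IS} (h : I.gword = I'.gword) : I.isPt ↔ I'.isPt := by
  simpa [isPt, gword] using congrArg (·.length = 1) h

/-- The witness replaces the prefix `s` of every state of `J` by `s'`. -/
lemma exists_rebase (J : Interval IS) {s s' r : List IS.G} (hs : s ≠ []) (hs' : IS.IsState s')
    (hg : IS.gOf s = IS.gOf s') (hJ : J.first = s ++ r) :
    ∃ J' : Interval IS, J'.first = s' ++ r ∧ J'.gword = J.gword := by
  have hpre : ∀ w ∈ J.seq, s <+: w := fun w hw =>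
    (List.prefix_append s r).trans (prefix_of_isChain_step J.isChain (hJ ▸ J.head?_seq) w hw)
  let f : List IS.G → List IS.G := fun w => s' ++ w.drop s.length
  have hf : ∀ t, f (s ++ t) = s' ++ t := fun t => by simp [f]
  have hchain : (J.seq.map f).IsChain IS.step := by
    refine List.isChain_map f |>.2 (J.isChain.imp_of_mem_imp ?_)
    rintro v w hv - ⟨g, rfl⟩
    obtain ⟨t, rfl⟩ := hpre v hv
    exact ⟨g, by rw [List.append_assoc, hf, hf, List.append_assoc]⟩
  have hstates : ∀ w ∈ J.seq.map f, IS.IsState w := by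
    simp only [List.mem_map]
    rintro _ ⟨v, hv, rfl⟩
    obtain ⟨t, rfl⟩ := hpre v hv
    exact hf t ▸ (J.isState_of_mem hv).append_congr hs hs' hg
  refine ⟨⟨J.seq.map f, by simp [J.seq_ne_nil], hstates, hchain⟩, ?_, ?_⟩
  · exact first_mk _ (by rw [List.head?_map, J.head?_seq, hJ, Option.map_some, hf])
  · simp only [gword, List.map_map]
    refine List.map_congr_left fun v hv => ?_
    obtain ⟨t, rfl⟩ := hpre v hv
    simp only [Function.comp_apply, hf]
    exact (gOf_append_congr hg t).symm

def append (I K : Interval IS) (h : relN I K) : Interval IS where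
  seq := I.seq ++ K.seq
  isInterval := by
    refine ⟨by simp [I.seq_ne_nil], fun w hw => ?_, I.isChain.append K.isChain ?_⟩
    · rcases List.mem_append.1 hw with hw | hw
      exacts [I.isState_of_mem hw, K.isState_of_mem hw]
    · rw [I.getLast?_seq, K.head?_seq]
      rintro _ ⟨⟩ _ ⟨⟩
      exact h

lemma gword_append (I K : Interval IS) (h : relN I K) :
    (I.append K h).gword = I.gword ++ K.gword :=
  List.map_append ..

lemma exists_append_of_relB {I J : Interval IS} (hJ : relB J I) :
    ∃ (K : Interval IS) (hK : relN I K), J = I.append K hK := by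
  obtain ⟨L, hL, hJL⟩ := hJ
  have hchain := J.isChain
  rw [hJL, List.isChain_append] at hchain
  have hK : IS.IsInterval L :=
    ⟨hL, fun w hw => J.isState_of_mem (hJL ▸ List.mem_append_right _ hw), hchain.2.1⟩
  obtain ⟨k, L, rfl⟩ := List.exists_cons_of_ne_nil hL
  have hN : relN I ⟨k :: L, hK⟩ := hchain.2.2 _ I.getLast?_seq _ rfl
  exact ⟨⟨k :: L, hK⟩, hN, by cases J; simp_all [append]⟩

end Interval

section Transfer

variable {I I' J : Interval IS}

lemma simI_iff_forall₂_gword {i : Fin (m + 1)} :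
    IS.simI i I J ↔ List.Forall₂ (fun g g' => g i = g' i) I.gword J.gword := by
  simp only [simI, Interval.gword, List.forall₂_map_left_iff, List.forall₂_map_right_iff]
  rfl

lemma simI_congr_left {i : Fin (m + 1)} (h : I.gword = I'.gword) (hJ : IS.simI i I J) :
    IS.simI i I' J := by
  rwa [simI_iff_forall₂_gword, ← h, ← simI_iff_forall₂_gword]

lemma simC_congr_left {Γ : Finset (Fin (m + 1))} (h : I.gword = I'.gword)
    (hJ : IS.simC Γ I J) : IS.simC Γ I' J := by
  induction hJ with
  | single hr =>
    obtain ⟨i, hi, hsim⟩ := hr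
    exact .single ⟨i, hi, simI_congr_left h hsim⟩
  | tail _ hr ih => exact ih.tail hr

lemma exists_relA_of_gword_eq (h : I.gword = I'.gword) (hJ : relA I J) :
    ∃ J', relA I' J' ∧ J'.gword = J.gword := by
  obtain ⟨J', hfirst, hJ'⟩ := J.exists_rebase (r := []) I.isState_last.1.1 I'.isState_last
    (Interval.gOf_last_eq_of_gword_eq h) (by rw [List.append_nil]; exact hJ)
  exact ⟨J', by rw [relA, hfirst, List.append_nil], hJ'⟩

lemma exists_relN_of_gword_eq (h : I.gword = I'.gword) (hJ : relN I J) :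
    ∃ J', relN I' J' ∧ J'.gword = J.gword := by
  obtain ⟨g, hg⟩ := hJ
  obtain ⟨J', hfirst, hJ'⟩ := J.exists_rebase I.isState_last.1.1 I'.isState_last
    (Interval.gOf_last_eq_of_gword_eq h) hg
  exact ⟨J', ⟨g, hfirst⟩, hJ'⟩

lemma exists_relBbar_of_gword_eq (h : I.gword = I'.gword) (hJ : relB J I) :
    ∃ J', relB J' I' ∧ J'.gword = J.gword := by
  obtain ⟨K, hK, rfl⟩ := Interval.exists_append_of_relB hJ
  obtain ⟨K', hK', hKK'⟩ := exists_relN_of_gword_eq h hK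
  refine ⟨I'.append K' hK', ⟨K'.seq, K'.seq_ne_nil, rfl⟩, ?_⟩
  rw [Interval.gword_append, Interval.gword_append, h, hKK']

lemma exists_hsRel_of_gword_eq {X : HSMod} (hX : X = .A ∨ X = .Bbar ∨ X = .N)
    (h : I.gword = I'.gword) (hJ : IS.hsRel X I J) :
    ∃ J', IS.hsRel X I' J' ∧ J'.gword = J.gword := by
  rcases hX with rfl | rfl | rfl
  exacts [exists_relA_of_gword_eq h hJ, exists_relBbar_of_gword_eq h hJ,
    exists_relN_of_gword_eq h hJ]

lemma exists_modRel_of_gword_eq [DecidableEq Var] {φ χ : EHSFormula m Var} (hφ : IsABN φ)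
    (hχ : χ ∈ TL φ) (h : I.gword = I'.gword) (hJ : IS.modRel χ I J) :
    ∃ J', IS.modRel χ I' J' ∧ J'.gword = J.gword := by
  induction φ with
  | pt | prop => simp [TL] at hχ
  | neg φ ih => exact ih hφ hχ
  | conj φ ψ ihφ ihψ =>
    rcases Finset.mem_union.1 hχ with hχ | hχ
    exacts [ihφ hφ.1 hχ, ihψ hφ.2 hχ]
  | know i ψ =>
    obtain rfl := Finset.mem_singleton.1 hχ
    exact ⟨J, simI_congr_left h hJ, rfl⟩
  | common Γ ψ =>
    obtain rfl := Finset.mem_singleton.1 hχ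
    exact ⟨J, simC_congr_left h hJ, rfl⟩
  | dia X ψ =>
    obtain rfl := Finset.mem_singleton.1 hχ
    exact exists_hsRel_of_gword_eq hφ.1 h hJ

end Transfer

lemma isABN_body_of_mem_TL {V : Type} [DecidableEq V] {φ χ : EHSFormula m V} (hφ : IsABN φ)
    (hχ : χ ∈ TL φ) : IsABN (body χ) := by
  induction φ with
  | pt | prop => simp [TL] at hχ
  | neg φ ih => exact ih hφ hχ
  | conj φ ψ ihφ ihψ =>
    rcases Finset.mem_union.1 hχ with hχ | hχ
    exacts [ihφ hφ.1 hχ, ihψ hφ.2 hχ]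
  | know | common => obtain rfl := Finset.mem_singleton.1 hχ; exact hφ
  | dia => obtain rfl := Finset.mem_singleton.1 hχ; exact hφ.2

theorem mctEq_of_gword_eq [DecidableEq Var] (Q : Var → Type) (dfa : ∀ p, DFA IS.G (Q p))
    (φ : EHSFormula m Var) (hφ : IsABN φ) {I I' : Interval IS} (h : I.gword = I'.gword) :
    MCTEq IS Q dfa φ I I' := by
  rw [MCTEq]
  refine ⟨Interval.gOf_first_eq_of_gword_eq h, Interval.gOf_last_eq_of_gword_eq h,
    Interval.isPt_iff_of_gword_eq h, fun p => by rw [h], fun χ hχ => ⟨?_, ?_⟩⟩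
  · intro J hJ
    obtain ⟨J', hJ', hg⟩ := exists_modRel_of_gword_eq hφ hχ h hJ
    exact ⟨J', hJ', mctEq_of_gword_eq Q dfa _ (isABN_body_of_mem_TL hφ hχ) hg.symm⟩
  · intro J' hJ'
    obtain ⟨J, hJ, hg⟩ := exists_modRel_of_gword_eq hφ hχ h.symm hJ'
    exact ⟨J, hJ, mctEq_of_gword_eq Q dfa _ (isABN_body_of_mem_TL hφ hχ) hg⟩
termination_by fsize φ
decreasing_by all_goals exact fsize_body_lt φ χ hχ

end ISRL

open ISRL in
theorem stmt7_general {m : ℕ} {Var : Type} [DecidableEq Var] (IS : ISRL m Var)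
    (Q : Var → Type) (dfa : ∀ p, DFA IS.G (Q p))
    (φ : EHSFormula m Var) (hφ : IsABN φ)
    (I I' : ISRL.Interval IS) (h : I.gword = I'.gword) :
    MCTEq IS Q dfa φ I I' :=
  mctEq_of_gword_eq Q dfa φ hφ h

open ISRL in
/-- Lemma 2: modal context trees are history-independent.  If `I` and `I'` are
intervals of the model `M` with `g(I) = g(I')`, then `MCT_I^φ = MCT_{I'}^φ`. -/
theorem stmt7 {m : ℕ} {Var : Type} [Fintype Var] [DecidableEq Var] (IS : ISRL m Var)
    (Q : Var → Type) [∀ p, Fintype (Q p)] (dfa : ∀ p, DFA IS.G (Q p))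
    (hdfa : ∀ p, (dfa p).accepts = (IS.lab p).matches')
    (φ : EHSFormula m Var) (hφ : IsABN φ)
    (I I' : ISRL.Interval IS) (h : I.gword = I'.gword) :
    MCTEq IS Q dfa φ I I' :=
  stmt7_general IS Q dfa φ hφ I I' h
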